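/- arXiv:1310.0548 — 5 statements merged into one kernel-verified Lean document; each statement's English description precedes it below -/
import Mathlib

section
/- Consider the daily-deals auction with m bidders, where bidder i has true type (vᵢ, pᵢ) ∈ ℝ × [0,1]. Given a convex g : [0,1] → ℝ with a proper binary scoring rule S satisfying S(p;p) = g(p), the mechanism that awards the slot to the bidder maximizing the adjusted value h(v̂,p̂) = v̂ + g(p̂), and charges the winner h(v̂₂,p̂₂) − S(p̂₁,ω) (where (v̂₂,p̂₂) is the second-highest adjusted-value bid and ω ∈ {0,1} is the purchase outcome drawn with probability p₁), is incentive compatible: for any fixed reports of the other bidders, a bidder's expected utility from any report (v̂,p̂) is at most her expected utility from reporting (v,p) truthfully. -/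
/-- Incentive compatibility of the daily-deals auction. Fixing the other bidders'
reports, `h2` is the highest adjusted value `v̂ + g(q̂)` among the others; the bidder
wins with report `(vr, pr)` iff `vr + g pr ≥ h2` and then pays `h2 - S(pr, ω)` where
`ω` is Bernoulli with her true probability `p`. Her expected utility from any report
is at most that from the truthful report `(v, p)`. -/
theorem stmt_3 (g : ℝ → ℝ) (hg : ConvexOn ℝ (Set.Icc (0:ℝ) 1) g)
    (S : ℝ → Bool → ℝ)
    (hSeq : ∀ q ∈ Set.Icc (0:ℝ) 1, q * S q true + (1 - q) * S q false = g q)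
    (hSproper : ∀ q ∈ Set.Icc (0:ℝ) 1, ∀ r ∈ Set.Icc (0:ℝ) 1,
      q * S r true + (1 - q) * S r false ≤ g q)
    (h2 : ℝ) (v : ℝ) (p : ℝ) (hp : p ∈ Set.Icc (0:ℝ) 1)
    (U : ℝ → ℝ → ℝ)
    (hU : ∀ vr pr, U vr pr =
      if h2 ≤ vr + g pr then v - h2 + (p * S pr true + (1 - p) * S pr false) else 0) :
    ∀ vr : ℝ, ∀ pr ∈ Set.Icc (0:ℝ) 1, U vr pr ≤ U v p := by
  intro vr pr hpr
  have hsc : p * S pr true + (1 - p) * S pr false ≤ g p := hSproper p hp pr hpr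
  have htrue : p * S p true + (1 - p) * S p false = g p := hSeq p hp
  rw [hU, hU, htrue]
  by_cases hwin : h2 ≤ v + g p
  · rw [if_pos hwin]
    split_ifs with h
    · linarith
    · linarith
  · rw [if_neg hwin]
    split_ifs with h
    · linarith
    · linarith
end

section
/- In the same auction as above (winner maximizes h(v,p)=v+g(p), pays h(v̂₂,p̂₂) − S(p̂₁,ω)), truthful reporting yields non-negative expected utility for every bidder (interim individual rationality). -/
/-- Interim individual rationality of the daily-deals auction: truthful reporting
yields non-negative expected utility. The bidder wins iff her adjusted value
`v + g p` is at least the highest adjusted value `h2` of the others, and then pays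
`h2 - S(p, ω)`; losers get utility `0`. -/
theorem stmt_4 (g : ℝ → ℝ) (hg : ConvexOn ℝ (Set.Icc (0:ℝ) 1) g)
    (S : ℝ → Bool → ℝ)
    (hSeq : ∀ q ∈ Set.Icc (0:ℝ) 1, q * S q true + (1 - q) * S q false = g q)
    (hSproper : ∀ q ∈ Set.Icc (0:ℝ) 1, ∀ r ∈ Set.Icc (0:ℝ) 1,
      q * S r true + (1 - q) * S r false ≤ g q)
    (h2 : ℝ) (v : ℝ) (p : ℝ) (hp : p ∈ Set.Icc (0:ℝ) 1)
    (U : ℝ → ℝ → ℝ)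
    (hU : ∀ vr pr, U vr pr =
      if h2 ≤ vr + g pr then v - h2 + (p * S pr true + (1 - p) * S pr false) else 0) :
    0 ≤ U v p := by
  rw [hU]
  split
  · rw [hSeq p hp]; linarith
  · exact le_refl 0
end

section
/- Suppose g : [0,1] → ℝ and there exists a deterministic truthful single-winner auction that always selects the bidder maximizing vᵢ + g(pᵢ). Then g is convex. -/
/-- Convexity of `g` is necessary for a deterministic truthful auction that always
awards the slot to the bidder maximizing `v + g(p)`. We fix a bidder and the reports
of the others; `M` is the highest adjusted value among the others. The mechanism is
given by a (deterministic) winning rule `win` on reports `(v̂, p̂)` and state-dependent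
transfers `t₀, t₁` paid to the bidder on winning; `U v p vr pr` is the expected
utility of a bidder of true type `(v, p)` reporting `(vr, pr)`. Incentive
compatibility, individual rationality, and welfare-maximizing selection force `g` to
be convex on `[0,1]`. -/
theorem stmt_8 (g : ℝ → ℝ)
    (hmech : ∃ (win : ℝ → ℝ → Bool) (t₀ t₁ : ℝ → ℝ → ℝ) (M : ℝ) (U : ℝ → ℝ → ℝ → ℝ → ℝ),
      -- expected utility of type (v,p) reporting (vr,pr)
      (∀ v p vr pr, U v p vr pr =
        if win vr pr then v + p * t₁ vr pr + (1 - p) * t₀ vr pr else 0) ∧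
      -- incentive compatibility
      (∀ v : ℝ, ∀ p ∈ Set.Icc (0:ℝ) 1, ∀ vr : ℝ, ∀ pr ∈ Set.Icc (0:ℝ) 1,
        U v p vr pr ≤ U v p v p) ∧
      -- individual rationality
      (∀ v : ℝ, ∀ p ∈ Set.Icc (0:ℝ) 1, 0 ≤ U v p v p) ∧
      -- the bidder wins iff she maximizes adjusted value v + g(p) (M = best of others)
      (∀ v : ℝ, ∀ p ∈ Set.Icc (0:ℝ) 1,
        (M < v + g p → win v p = true) ∧ (v + g p < M → win v p = false))) :
    ConvexOn ℝ (Set.Icc (0:ℝ) 1) g := by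

  obtain ⟨win, t₀, t₁, M, U, hU, hIC, hIR, hsel⟩ := hmech
  -- Upper bound: any winning report's expected transfer at belief q is at most g q - M
  have key : ∀ q ∈ Set.Icc (0:ℝ) 1, ∀ vr : ℝ, ∀ pr ∈ Set.Icc (0:ℝ) 1,
      win vr pr = true → q * t₁ vr pr + (1 - q) * t₀ vr pr ≤ g q - M := by
    intro q hq vr pr hpr hw
    refine le_of_forall_pos_le_add ?_
    intro ε hε
    have hwin : win (M - g q - ε) q = false := (hsel _ q hq).2 (by linarith)
    have h0 : U (M - g q - ε) q (M - g q - ε) q = 0 := by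
      rw [hU]; simp [hwin]
    have h1 : U (M - g q - ε) q vr pr ≤ 0 := h0 ▸ hIC (M - g q - ε) q hq vr pr hpr
    rw [hU, if_pos hw] at h1
    linarith
  -- Lower bound: near the threshold there is a winning report achieving g q - M - ε
  have lower : ∀ q ∈ Set.Icc (0:ℝ) 1, ∀ ε > 0, ∃ vr : ℝ, win vr q = true ∧
      g q - M - ε ≤ q * t₁ vr q + (1 - q) * t₀ vr q := by
    intro q hq ε hε
    have hw : win (M - g q + ε) q = true := (hsel _ q hq).1 (by linarith)
    refine ⟨M - g q + ε, hw, ?_⟩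
    have hir := hIR (M - g q + ε) q hq
    rw [hU, if_pos hw] at hir
    linarith
  constructor
  · exact convex_Icc 0 1
  · intro x hx y hy a b ha hb hab
    have hp : a • x + b • y ∈ Set.Icc (0:ℝ) 1 := (convex_Icc 0 1) hx hy ha hb hab
    simp only [smul_eq_mul] at hp ⊢
    refine le_of_forall_pos_le_add ?_
    intro ε hε
    obtain ⟨vr, hw, hl⟩ := lower (a * x + b * y) hp ε hε
    have hx' := key x hx vr (a * x + b * y) hp hw
    have hy' := key y hy vr (a * x + b * y) hp hw
    have hid : (a * x + b * y) * t₁ vr (a * x + b * y)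
          + (1 - (a * x + b * y)) * t₀ vr (a * x + b * y)
        = a * (x * t₁ vr (a * x + b * y) + (1 - x) * t₀ vr (a * x + b * y))
          + b * (y * t₁ vr (a * x + b * y) + (1 - y) * t₀ vr (a * x + b * y)) := by
      linear_combination (-(t₀ vr (a * x + b * y))) * hab
    have h1 := mul_le_mul_of_nonneg_left hx' ha
    have h2 := mul_le_mul_of_nonneg_left hy' hb
    have h3 : a * (g x - M) + b * (g y - M) = a * g x + b * g y - M := by
      linear_combination (-M) * hab
    linarith [h1, h2, hid, hl, h3]
end

section
/- In the general setting with m bidders, outcomes 𝒪, and component-wise convex consumer welfare functions g_o, the VCG-like mechanism that selects o* maximizing W^o = Σᵢ vᵢ(o) + g_o(p⃗(o)) and charges bidder i the amount W_{−i} − Σ_{i'≠i} v_{i'}(o*) − S_{o*,i,p⃗_{−i}(o*)}(pᵢ(o*), ω) upon realized state ω ∈ Ω_{i,o*}, is dominant-strategy incentive compatible: each bidder's expected utility from truthful reporting, W^{o*} − W_{−i}, is at least her expected utility from any misreport. -/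
/-- Dominant-strategy incentive compatibility of the general VCG-like mechanism.
We fix bidder `i` and the reports of the others: `B o` is the sum of the other
bidders' reported values for outcome `o`, and `g o` is the consumer welfare function
at outcome `o` as a function of bidder `i`'s prediction (the others' predictions
being fixed), assumed convex (component-wise convexity). `S o` is a proper scoring
rule for `g o` (Savage construction). Bidder `i` has true valuation `v` and true
predictions `p`, and `Wmi` is the welfare of the selection excluding `i`. If `ostar`
maximizes the truthfully-reported welfare `v o + B o + g o (p o)` and `o'` is the
outcome selected under an arbitrary misreport `(vr, pr)`, then the expected utility
of the misreport is at most the truthful expected utility `W^{o*} − W_{−i}`. -/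
theorem stmt_11 {O : Type*} [Fintype O] [Nonempty O]
    {Ω : O → Type*} [∀ o, Fintype (Ω o)]
    (B : O → ℝ) (g : (o : O) → (Ω o → ℝ) → ℝ)
    (hg : ∀ o, ConvexOn ℝ (stdSimplex ℝ (Ω o)) (g o))
    (S : (o : O) → (Ω o → ℝ) → Ω o → ℝ)
    (hSeq : ∀ o, ∀ q ∈ stdSimplex ℝ (Ω o), ∑ ω, q ω * S o q ω = g o q)
    (hSproper : ∀ o, ∀ q ∈ stdSimplex ℝ (Ω o), ∀ r ∈ stdSimplex ℝ (Ω o),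
      ∑ ω, q ω * S o r ω ≤ g o q)
    (v : O → ℝ) (p : (o : O) → Ω o → ℝ) (hp : ∀ o, p o ∈ stdSimplex ℝ (Ω o))
    (Wmi : ℝ)
    (ostar : O) (hstar : ∀ o, v o + B o + g o (p o) ≤ v ostar + B ostar + g ostar (p ostar))
    (vr : O → ℝ) (pr : (o : O) → Ω o → ℝ) (hpr : ∀ o, pr o ∈ stdSimplex ℝ (Ω o))
    (o' : O) (ho' : ∀ o, vr o + B o + g o (pr o) ≤ vr o' + B o' + g o' (pr o')) :
    -- utility of the misreport ≤ truthful utility W^{o*} − W_{−i}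
    v o' - Wmi + B o' + ∑ ω, p o' ω * S o' (pr o') ω ≤
      (v ostar + B ostar + g ostar (p ostar)) - Wmi := by
  have h1 : ∑ ω, p o' ω * S o' (pr o') ω ≤ g o' (p o') :=
    hSproper o' (p o') (hp o') (pr o') (hpr o')
  have h2 := hstar o'
  linarith
end

section
/- With g as in the previous statement, for any ε > 0 there exist two bidders — one with type (v₁, p₁) = (0, 1) and one with type (v₂, p₂) = (v, β) with v < (1−α)/(β−α)·V_max — such that v₁ + g(p₁) > v₂ + g(p₂); hence the mechanism maximizing v + g(p) selects the zero-value bidder, and achieves no multiplicative approximation to v* = max{vᵢ : pᵢ ≥ β}. -/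
/-- With the threshold function `g` as before, for every `ε > 0` there are two
bidders, one of type `(0, 1)` and one of type `(v, β)` with `0 < v < ε` and
`v < (1−α)/(β−α)·V_max`, such that the maximizer of `v + g(p)` selects the
zero-value quality-1 bidder over the positive-value quality-`β` bidder; hence no
multiplicative approximation to `v* = max{vᵢ : pᵢ ≥ β}` is achieved. -/
theorem stmt_17 (α β Vmax : ℝ) (hα : 0 ≤ α) (hαβ : α < β) (hβ : β < 1) (hV : 0 < Vmax)
    (g : ℝ → ℝ)
    (hgdef : ∀ p, g p = if p < α then 0 else Vmax * (p - α) / (β - α)) :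
    ∀ ε > (0:ℝ), ∃ v : ℝ, 0 < v ∧ v < ε ∧ v < (1 - α) / (β - α) * Vmax ∧
      v + g β < 0 + g 1 := by
  intro ε hε
  have hba : (0:ℝ) < β - α := by linarith
  have hgap : 0 < Vmax * (1 - β) / (β - α) := div_pos (mul_pos hV (by linarith)) hba
  refine ⟨min ε (Vmax * (1 - β) / (β - α)) / 2, half_pos (lt_min hε hgap), ?_, ?_, ?_⟩
  · have := min_le_left ε (Vmax * (1 - β) / (β - α)); linarith
  · have h1 := min_le_right ε (Vmax * (1 - β) / (β - α))
    have : Vmax * (1 - β) / (β - α) ≤ (1 - α) / (β - α) * Vmax := by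
      rw [div_mul_eq_mul_div, div_le_div_iff₀ hba hba]
      nlinarith [mul_pos (mul_pos hV hba) hba]
    linarith
  · have h1 := min_le_right ε (Vmax * (1 - β) / (β - α))
    rw [hgdef β, hgdef 1, if_neg (by linarith), if_neg (by linarith)]
    have hβg : Vmax * (β - α) / (β - α) = Vmax := by field_simp
    rw [hβg]
    have : Vmax * (1 - β) / (β - α) = Vmax * (1 - α) / (β - α) - Vmax := by
      field_simp; ring
    linarith
end
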